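/- Suppose w ∈ G(m, p, n) is an element whose underlying permutation has a single cycle, or has exactly two cycles and these two cycles have nonzero weights that sum to 0 in ℤ/mℤ. Then [id, w]_{cdf} = [id, w]_{ℓ_R}. -/

import Mathlib

open Equiv Finset
@[ext]
structure GW (m n : ℕ) where
  perm : Equiv.Perm (Fin n)
  wt : Fin n → ZMod m
namespace GW
variable {m n : ℕ}
instance : Mul (GW m n) :=
  ⟨fun x y => ⟨x.perm * y.perm, fun i => x.wt i + y.wt (x.perm⁻¹ i)⟩⟩
instance : One (GW m n) := ⟨⟨1, 0⟩⟩
instance : Inv (GW m n) := ⟨fun x => ⟨x.perm⁻¹, fun i => -x.wt (x.perm i)⟩⟩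
@[simp] theorem mul_perm (x y : GW m n) : (x * y).perm = x.perm * y.perm := rfl
@[simp] theorem mul_wt (x y : GW m n) (i : Fin n) :
    (x * y).wt i = x.wt i + y.wt (x.perm⁻¹ i) := rfl
@[simp] theorem one_perm : (1 : GW m n).perm = 1 := rfl
@[simp] theorem one_wt (i : Fin n) : (1 : GW m n).wt i = 0 := rfl
@[simp] theorem inv_perm (x : GW m n) : (x⁻¹).perm = x.perm⁻¹ := rfl
@[simp] theorem inv_wt (x : GW m n) (i : Fin n) : (x⁻¹).wt i = -x.wt (x.perm i) := rfl
private theorem gw_mul_assoc (a b c : GW m n) : a * b * c = a * (b * c) := by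
  ext i
  · simp [mul_assoc]
  · simp [mul_inv_rev, add_assoc]
private theorem gw_one_mul (a : GW m n) : 1 * a = a := by ext i <;> simp
private theorem gw_mul_one (a : GW m n) : a * 1 = a := by ext i <;> simp
private theorem gw_inv_mul_cancel (a : GW m n) : a⁻¹ * a = 1 := by ext i <;> simp
instance : Group (GW m n) where
  mul := (· * ·)
  one := 1
  inv := Inv.inv
  mul_assoc := gw_mul_assoc
  one_mul := gw_one_mul
  mul_one := gw_mul_one
  inv_mul_cancel := gw_inv_mul_cancel
def cycleOf (w : GW m n) (i : Fin n) : Finset (Fin n) :=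
  Finset.univ.filter fun j => w.perm.SameCycle i j
def cycles (w : GW m n) : Finset (Finset (Fin n)) :=
  Finset.univ.image fun i => w.cycleOf i
def cycWt (w : GW m n) (C : Finset (Fin n)) : ZMod m := ∑ i ∈ C, w.wt i
def numCycles (w : GW m n) : ℕ := (cycles w).card
def c0 (w : GW m n) : ℕ := ((cycles w).filter fun C => cycWt w C = 0).card
def codimfix (w : GW m n) : ℕ := n - c0 w
def wtTot (w : GW m n) : ZMod m := ∑ i, w.wt i

-- NEW PIECES BELOW --

/-- The base relation on cycles of `w` induced by `u`: two cycles of `w` are related if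
some cycle of `u` meets both of them. -/
def piRelBase (u w : GW m n) (C₁ C₂ : Finset (Fin n)) : Prop :=
  C₁ ∈ cycles w ∧ C₂ ∈ cycles w ∧ ∃ D ∈ cycles u, (D ∩ C₁).Nonempty ∧ (D ∩ C₂).Nonempty

/-- The equivalence relation on the cycles of `w` generated by `piRelBase`. -/
def piRel (u w : GW m n) : Finset (Fin n) → Finset (Fin n) → Prop :=
  Relation.EqvGen (piRelBase u w)

open Classical in
/-- The part of the partition `Π_u(w)` containing the cycle `C` of `w`. -/
noncomputable def piPart (u w : GW m n) (C : Finset (Fin n)) : Finset (Finset (Fin n)) :=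
  (cycles w).filter fun C' => piRel u w C C'

/-- The set partition `Π_u(w)` of the cycles of `w`, as the set of its parts. -/
noncomputable def piParts (u w : GW m n) : Finset (Finset (Finset (Fin n))) :=
  (cycles w).image fun C => piPart u w C

/-- The weight of a collection `B` of cycles: the sum of the weights of its cycles. -/
def partWt (w : GW m n) (B : Finset (Finset (Fin n))) : ZMod m :=
  ∑ C ∈ B, cycWt w C

open Classical in
/-- The number of parts of `Π_u(w)` of nonzero total weight. -/
noncomputable def piPartsNonzeroWt (u w : GW m n) : ℕ :=
  ((piParts u w).filter fun B => partWt w B ≠ 0).card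

/-- The support of a collection of cycles: the union of the cycles' underlying sets. -/
def supp (B : Finset (Finset (Fin n))) : Finset (Fin n) := B.sup id

/-- Restriction of a permutation to an invariant set `A` (junk value `1` if `A` is
not invariant): it agrees with `σ` on `A` and is the identity off `A`. -/
noncomputable def restrictPerm (σ : Equiv.Perm (Fin n)) (A : Finset (Fin n)) :
    Equiv.Perm (Fin n) :=
  if h : ∀ i, σ i ∈ A ↔ i ∈ A then
    { toFun := fun i => if i ∈ A then σ i else i
      invFun := fun i => if i ∈ A then σ.symm i else i
      left_inv := by
        intro i
        by_cases hi : i ∈ A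
        · simp [hi, (h i).mpr hi]
        · simp [hi]
      right_inv := by
        intro j
        by_cases hj : j ∈ A
        · have hs : σ.symm j ∈ A := by
            have h2 := h (σ.symm j)
            rw [Equiv.apply_symm_apply] at h2
            exact h2.mp hj
          simp [hj, hs]
        · simp [hj] }
  else 1


/-- The restriction `x|_A` of `x` to a subset `A` of `{1,…,n}` (stabilized by `x`):
it agrees with `x` on `A` and acts as the identity, with weight `0`, off `A`. -/
noncomputable def restrict (x : GW m n) (A : Finset (Fin n)) : GW m n :=
  ⟨restrictPerm x.perm A, fun i => if i ∈ A then x.wt i else 0⟩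

/-- The cycles of `x` contained in `A`; for `x = y|_A` this gives the cycles of the
restriction of `y` to `A`, viewed as an element of `G(m,1,#A)`. -/
def cyclesIn (x : GW m n) (A : Finset (Fin n)) : Finset (Finset (Fin n)) :=
  (cycles x).filter fun C => C ⊆ A

/-- The monomial matrix representing `w`: the nonzero entry in column `j` sits in row
`w.perm j` and equals `ζ^(a_(w.perm j))`, where `ζ = exp(2πi/m)`. -/
noncomputable def toMatrix (w : GW m n) : Matrix (Fin n) (Fin n) ℂ :=
  Matrix.of fun i j =>
    if w.perm j = i then Complex.exp (2 * Real.pi * Complex.I * ((w.wt i).val : ℂ) / (m : ℂ))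
    else 0

/-- `S` (a set of cycles of `w`) can be partitioned into singletons whose weight is
`0 (mod p)` and pairs of cycles whose weights sum to `0` in `ℤ/mℤ`; encoded by an
involution pairing up the cycles. -/
def PairedUp (p : ℕ) (hpm : p ∣ m) (w : GW m n) (S : Finset (Finset (Fin n))) : Prop :=
  ∃ π : {C // C ∈ S} → {C // C ∈ S}, Function.Involutive π ∧
    (∀ C, π C = C → ZMod.castHom hpm (ZMod p) (cycWt w C.1) = 0) ∧
    (∀ C, π C ≠ C → cycWt w C.1 + cycWt w (π C).1 = 0)

/-- Membership in `G(m,p,n)`: the total weight is `0 (mod p)`. -/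
def Gmem (p : ℕ) (hpm : p ∣ m) (w : GW m n) : Prop :=
  ZMod.castHom hpm (ZMod p) (wtTot w) = 0

/-- A reflection of `G(m,p,n)`: an element of the group whose fixed space has codimension 1. -/
def IsRefl (p : ℕ) (hpm : p ∣ m) (t : GW m n) : Prop :=
  Gmem p hpm t ∧ codimfix t = 1

/-- The reflection length of `w` with respect to the reflections of `G(m,p,n)`. -/
noncomputable def lR (p : ℕ) (hpm : p ∣ m) (w : GW m n) : ℕ :=
  sInf {k | ∃ l : List (GW m n), (∀ t ∈ l, IsRefl p hpm t) ∧ l.length = k ∧ l.prod = w}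

/-- The order `≤_f` determined by a subadditive function `f`. -/
def leF (f : GW m n → ℕ) (x y : GW m n) : Prop := f x + f (x⁻¹ * y) = f y

/-- The interval `[id, w]_f` inside the poset `(G(m,p,n), ≤_f)`. -/
def interval (p : ℕ) (hpm : p ∣ m) (f : GW m n → ℕ) (w : GW m n) : Set (GW m n) :=
  {u | Gmem p hpm u ∧ leF f u w}

/-- A vector `v ∈ ℂⁿ` is regular for `G(m,p,n)` if it is fixed by no reflection. -/
def IsRegularVec (p : ℕ) (hpm : p ∣ m) (v : Fin n → ℂ) : Prop :=
  ∀ t : GW m n, IsRefl p hpm t → (toMatrix t).mulVec v ≠ v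

/-- An element `w ∈ G(m,p,n)` is regular if it has an eigenvector that is a regular vector. -/
def IsRegularElt (p : ℕ) (hpm : p ∣ m) (w : GW m n) : Prop :=
  ∃ v : Fin n → ℂ, v ≠ 0 ∧ (∃ c : ℂ, (toMatrix w).mulVec v = c • v) ∧ IsRegularVec p hpm v

end GW

/-!
Record an element `x` of `G(m,1,n)` by the multiset of its cycle weights, so that `codimfix x`
is `n` minus the number of zero weights. Right multiplication by a reflection changes one
weight, merges two cycles or splits one; so it removes at most one zero weight, and when it
does, the nonzero weights only gain members. As every element is a product of `codimfix`
reflections of `G(m,1,n)`, `codimfix` is subadditive and bounded by `ℓ_R`, and `u ≤_cdf w`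
forces the nonzero weights of `u` and of `u⁻¹ w` into those of `w`.

An element whose nonzero weights split into singletons divisible by `p` and pairs summing to
`0` is a product of `codimfix` reflections of `G(m,p,n)`, so `ℓ_R = codimfix` there. The nonzero
weights of the `w` of the theorem are `∅`, `{a}` or `{a, -a}`, and every element of `G(m,p,n)`
whose nonzero weights lie among them splits in this way; so `ℓ_R = codimfix` at `u`, `u⁻¹ w`
and `w`, which makes the two intervals equal.
-/

namespace Equiv.Perm

variable {α : Type*} {σ : Perm α} {i j k l : α}

theorem SameCycle.mem_of_forall_apply_mem [Finite α] {S : Set α} (hS : ∀ x ∈ S, σ x ∈ S)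
    (hi : i ∈ S) (h : σ.SameCycle i j) : j ∈ S := by
  obtain ⟨t, rfl⟩ := h.exists_nat_pow_eq
  clear h
  induction t with
  | zero => exact hi
  | succ t ih => rw [pow_succ', mul_apply]; exact hS _ ih

variable [DecidableEq α]

theorem mul_swap_apply_of_ne (hi : k ≠ i) (hj : k ≠ j) : (σ * swap i j) k = σ k := by
  rw [mul_apply, swap_apply_of_ne_of_ne hi hj]

variable [Finite α]

theorem sameCycle_mul_swap_of_sameCycle_right (h : ¬σ.SameCycle i j) (hk : σ.SameCycle j k) :
    (σ * swap i j).SameCycle i k := by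
  have hσj : σ j = (σ * swap i j) i := by rw [mul_apply, swap_apply_left]
  let S : Set α := {l | σ.SameCycle j l → (σ * swap i j).SameCycle i l}
  have hS : ∀ l ∈ S, σ l ∈ S := by
    intro l hl hjl
    have hjl : σ.SameCycle j l := sameCycle_apply_right.1 hjl
    have hli : l ≠ i := by rintro rfl; exact h hjl.symm
    by_cases hlj : l = j
    · rw [hlj, hσj]
      exact sameCycle_apply_right.2 .rfl
    · rw [← mul_swap_apply_of_ne hli hlj]
      exact sameCycle_apply_right.2 (hl hjl)
  have hσjS : σ j ∈ S := fun _ => hσj ▸ sameCycle_apply_right.2 .rfl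
  exact SameCycle.mem_of_forall_apply_mem hS hσjS (sameCycle_apply_left.2 hk) hk

theorem sameCycle_mul_swap_iff (h : ¬σ.SameCycle i j) :
    (σ * swap i j).SameCycle i k ↔ σ.SameCycle i k ∨ σ.SameCycle j k := by
  constructor
  · intro hk
    refine SameCycle.mem_of_forall_apply_mem (S := {l | σ.SameCycle i l ∨ σ.SameCycle j l})
      ?_ (Or.inl .rfl) hk
    intro l hl
    simp only [Set.mem_ofPred_eq, mul_apply, sameCycle_apply_right]
    rw [swap_apply_def]
    split_ifs with hli hlj
    · exact Or.inr .rfl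
    · exact Or.inl .rfl
    · exact hl
  · rintro (hk | hk)
    · have hij := sameCycle_mul_swap_of_sameCycle_right h .rfl
      have hjk := sameCycle_mul_swap_of_sameCycle_right (fun h' => h h'.symm) hk
      rw [swap_comm] at hjk
      exact hij.trans hjk
    · exact sameCycle_mul_swap_of_sameCycle_right h hk

theorem sameCycle_mul_swap_iff_of_not_sameCycle (hi : ¬σ.SameCycle k i)
    (hj : ¬σ.SameCycle k j) : (σ * swap i j).SameCycle k l ↔ σ.SameCycle k l := by
  have hne : ∀ l, σ.SameCycle k l → l ≠ i ∧ l ≠ j := by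
    rintro l hl
    exact ⟨by rintro rfl; exact hi hl, by rintro rfl; exact hj hl⟩
  constructor
  · refine SameCycle.mem_of_forall_apply_mem (S := {l | σ.SameCycle k l}) ?_ .rfl
    intro l hl
    rw [Set.mem_ofPred_eq, mul_swap_apply_of_ne (hne l hl).1 (hne l hl).2]
    exact sameCycle_apply_right.2 hl
  · intro hl
    refine (SameCycle.mem_of_forall_apply_mem
      (S := {l | σ.SameCycle k l ∧ (σ * swap i j).SameCycle k l}) ?_ ⟨.rfl, .rfl⟩ hl).2
    rintro l ⟨hl, hl'⟩
    have hτl := mul_swap_apply_of_ne (σ := σ) (hne l hl).1 (hne l hl).2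
    exact ⟨sameCycle_apply_right.2 hl, hτl ▸ sameCycle_apply_right.2 hl'⟩

/-- The first return `d` of the orbit of `i` to `j` makes `{σ i, …, σ^d i}` a cycle of
`σ * swap i j` avoiding `i`. -/
theorem not_sameCycle_mul_swap (hij : i ≠ j) (h : σ.SameCycle i j) :
    ¬(σ * swap i j).SameCycle j i := by
  classical
  have hex : ∃ d, 0 < d ∧ (σ ^ d) i = j := by
    obtain ⟨d, hd, -, hdj⟩ := h.exists_pow_eq''
    exact ⟨d, hd, hdj⟩
  obtain ⟨hd, hdj⟩ := Nat.find_spec hex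
  set d := Nat.find hex
  have hbefore : ∀ t, 0 < t → t < d → (σ ^ t) i ≠ i ∧ (σ ^ t) i ≠ j := by
    intro t ht htd
    refine ⟨fun hti => ?_, fun htj => Nat.find_min hex htd ⟨ht, htj⟩⟩
    refine Nat.find_min hex (show d - t < d by omega) ⟨by omega, ?_⟩
    rw [← hti, ← mul_apply, ← pow_add, Nat.sub_add_cancel htd.le, hdj]
  let S : Set α := {l | ∃ t, 0 < t ∧ t ≤ d ∧ (σ ^ t) i = l}
  have hS : ∀ l ∈ S, (σ * swap i j) l ∈ S := by
    rintro l ⟨t, ht, htd, rfl⟩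
    rcases htd.lt_or_eq with htd | rfl
    · refine ⟨t + 1, by omega, htd, ?_⟩
      rw [mul_swap_apply_of_ne (hbefore t ht htd).1 (hbefore t ht htd).2, pow_succ', mul_apply]
    · exact ⟨1, one_pos, hd, by rw [hdj, mul_apply, swap_apply_right, pow_one]⟩
  rintro hji
  obtain ⟨t, ht, htd, hti⟩ := SameCycle.mem_of_forall_apply_mem hS ⟨d, hd, le_rfl, hdj⟩ hji
  rcases htd.lt_or_eq with htd | rfl
  · exact (hbefore t ht htd).1 hti
  · exact hij (hdj.symm.trans hti).symm

end Equiv.Perm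

theorem Finset.map_val_eq_cons_erase {α β : Type*} [DecidableEq α] {s : Finset α} {a : α}
    (f : α → β) (ha : a ∈ s) : s.val.map f = f a ::ₘ (s.erase a).val.map f := by
  rw [erase_val, ← Multiset.map_cons, Multiset.cons_erase ha]

namespace Multiset

variable {M : Type*} [Zero M] [DecidableEq M]

theorem count_zero_cons (c : M) (s : Multiset M) :
    (c ::ₘ s).count 0 = s.count 0 + if c = 0 then 1 else 0 := by
  simp only [count_cons, eq_comm]

theorem filter_ne_zero_cons (c : M) (s : Multiset M) :
    (c ::ₘ s).filter (· ≠ 0) =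
      if c = 0 then s.filter (· ≠ 0) else c ::ₘ s.filter (· ≠ 0) := by
  split_ifs with hc
  · exact filter_cons_of_neg _ (not_not.2 hc)
  · exact filter_cons_of_pos _ hc

end Multiset

section WeightMove

variable {M : Type*} [AddMonoid M]

/-- The ways right multiplication by a reflection can change the multiset of cycle weights. -/
inductive WeightMove : Multiset M → Multiset M → Prop
  | change (c d : M) (s : Multiset M) : WeightMove (c ::ₘ s) (d ::ₘ s)
  | merge (c d : M) (s : Multiset M) : WeightMove (c ::ₘ d ::ₘ s) ((c + d) ::ₘ s)
  | split (c d : M) (s : Multiset M) : WeightMove ((c + d) ::ₘ s) (c ::ₘ d ::ₘ s)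

variable [DecidableEq M] {s t : Multiset M}

open Multiset in
theorem WeightMove.count_zero_le (h : WeightMove s t) : s.count 0 ≤ t.count 0 + 1 := by
  cases h with
  | change c d s => simp only [count_zero_cons]; split_ifs <;> omega
  | merge c d s =>
    rcases eq_or_ne c 0 with rfl | hc
    · simp only [count_zero_cons, zero_add, if_true]; split_ifs <;> omega
    · simp only [count_zero_cons, hc, if_false]; split_ifs <;> omega
  | split c d s => simp only [count_zero_cons]; split_ifs <;> omega

open Multiset in
theorem WeightMove.filter_ne_zero_le (h : WeightMove s t) (hst : s.count 0 = t.count 0 + 1) :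
    s.filter (· ≠ 0) ≤ t.filter (· ≠ 0) := by
  cases h with
  | change c d s =>
    simp only [count_zero_cons] at hst
    simp only [filter_ne_zero_cons]
    split_ifs at hst ⊢ <;> first | omega | exact le_cons_self _ _
  | merge c d s =>
    rcases eq_or_ne c 0 with rfl | hc
    · simp only [zero_add, filter_ne_zero_cons, if_true, le_refl]
    rcases eq_or_ne d 0 with rfl | hd
    · simp only [add_zero, filter_ne_zero_cons, hc, if_false, if_true, le_refl]
    simp only [count_zero_cons, hc, hd, if_false] at hst
    split_ifs at hst <;> omega
  | split c d s =>
    simp only [count_zero_cons] at hst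
    simp only [filter_ne_zero_cons]
    split_ifs at hst ⊢ <;> first | omega | exact (le_cons_self _ _).trans (le_cons_self _ _)

end WeightMove

namespace GW

variable {m n : ℕ}

section Cycles

variable {x y : GW m n} {i j k : Fin n} {C : Finset (Fin n)}

theorem mem_cycleOf : j ∈ x.cycleOf i ↔ x.perm.SameCycle i j := by
  simp [cycleOf]

theorem mem_cycleOf_self : i ∈ x.cycleOf i :=
  mem_cycleOf.2 .rfl

theorem cycleOf_eq_cycleOf_iff : x.cycleOf i = x.cycleOf j ↔ x.perm.SameCycle i j := by
  refine ⟨fun h => mem_cycleOf.1 (h ▸ mem_cycleOf_self), fun h => ?_⟩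
  ext k
  simp only [mem_cycleOf]
  exact ⟨h.symm.trans, h.trans⟩

theorem apply_mem_cycleOf_iff : x.perm k ∈ x.cycleOf i ↔ k ∈ x.cycleOf i := by
  simp only [mem_cycleOf, Perm.sameCycle_apply_right]

theorem cycleOf_eq_singleton (h : x.perm i = i) : x.cycleOf i = {i} := by
  ext j
  rw [mem_cycleOf, mem_singleton]
  exact ⟨fun hj => (hj.eq_of_left h).symm, by rintro rfl; exact .rfl⟩

theorem cycleOf_congr (h : x.perm = y.perm) (i : Fin n) : x.cycleOf i = y.cycleOf i := by
  simp only [cycleOf, h]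

theorem mem_cycles : C ∈ cycles x ↔ ∃ i, x.cycleOf i = C := by
  simp [cycles]

theorem cycleOf_mem_cycles : x.cycleOf i ∈ cycles x :=
  mem_cycles.2 ⟨i, rfl⟩

theorem eq_cycleOf_of_mem_cycles (hC : C ∈ cycles x) (hi : i ∈ C) : C = x.cycleOf i := by
  obtain ⟨j, rfl⟩ := mem_cycles.1 hC
  exact cycleOf_eq_cycleOf_iff.2 (mem_cycleOf.1 hi)

theorem cycles_congr (h : x.perm = y.perm) : cycles x = cycles y := by
  simp only [cycles, cycleOf_congr h]

theorem numCycles_le (x : GW m n) : numCycles x ≤ n :=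
  card_image_le.trans_eq (card_fin n)

theorem cycWt_mul (hC : ∀ k, x.perm k ∈ C ↔ k ∈ C) (y : GW m n) :
    cycWt (x * y) C = cycWt x C + cycWt y C := by
  simp only [cycWt, mul_wt, sum_add_distrib, add_right_inj]
  exact sum_equiv x.perm⁻¹ (fun k => by simpa using hC (x.perm⁻¹ k)) fun _ _ => rfl

theorem cycWt_mul_cycleOf (x y : GW m n) (k : Fin n) :
    cycWt (x * y) (x.cycleOf k) = cycWt x (x.cycleOf k) + cycWt y (x.cycleOf k) :=
  cycWt_mul (fun _ => apply_mem_cycleOf_iff) y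

theorem cycWt_one : cycWt (1 : GW m n) C = 0 :=
  sum_eq_zero fun _ _ => rfl

theorem cycWt_inv (hC : ∀ k, x.perm k ∈ C ↔ k ∈ C) : cycWt x⁻¹ C = -cycWt x C := by
  rw [cycWt, cycWt, ← Finset.sum_neg_distrib]
  exact sum_equiv x.perm (fun k => (hC k).symm) fun _ _ => rfl

theorem cycleOf_inv (x : GW m n) (i : Fin n) : x⁻¹.cycleOf i = x.cycleOf i := by
  ext j
  simp only [mem_cycleOf, inv_perm, Perm.sameCycle_inv]

theorem cycles_inv (x : GW m n) : cycles x⁻¹ = cycles x := by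
  simp only [cycles, cycleOf_inv]

theorem exists_not_sameCycle (h : 1 < numCycles x) : ∃ i j, ¬x.perm.SameCycle i j := by
  obtain ⟨C, hC, C', hC', hne⟩ := one_lt_card.1 h
  obtain ⟨i, rfl⟩ := mem_cycles.1 hC
  obtain ⟨j, rfl⟩ := mem_cycles.1 hC'
  exact ⟨i, j, mt cycleOf_eq_cycleOf_iff.2 hne⟩

end Cycles

def cycWts (x : GW m n) : Multiset (ZMod m) := (cycles x).val.map (cycWt x)

def nzWts (x : GW m n) : Multiset (ZMod m) := (cycWts x).filter (· ≠ 0)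

section Weights

theorem card_cycWts (x : GW m n) : Multiset.card (cycWts x) = numCycles x :=
  Multiset.card_map _ _

theorem c0_eq_count (x : GW m n) : c0 x = (cycWts x).count 0 := by
  rw [cycWts, Multiset.count_map, c0, card_def, filter_val]
  simp only [eq_comm]

theorem codimfix_eq (x : GW m n) : codimfix x = n - (cycWts x).count 0 := by
  rw [codimfix, c0_eq_count]

theorem count_zero_cycWts_le (x : GW m n) : (cycWts x).count 0 ≤ n :=
  (Multiset.count_le_card _ _).trans ((card_cycWts x).trans_le (numCycles_le x))

theorem sum_nzWts (x : GW m n) : (nzWts x).sum = wtTot x := by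
  rw [nzWts, cycWts, Multiset.filter_map]
  change ∑ C ∈ (cycles x).filter (fun C => cycWt x C ≠ 0), cycWt x C = _
  rw [sum_filter_ne_zero, wtTot, cycles, sum_image' x.wt fun i _ => ?_]
  simp only [cycWt, cycleOf_eq_cycleOf_iff, Perm.sameCycle_comm]
  rfl

theorem card_nzWts_le (x : GW m n) : Multiset.card (nzWts x) ≤ numCycles x :=
  card_cycWts x ▸ Multiset.card_le_card (Multiset.filter_le _ _)

theorem ne_zero_of_mem_nzWts {x : GW m n} {a : ZMod m} (ha : a ∈ nzWts x) : a ≠ 0 :=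
  (Multiset.mem_filter.1 ha).2

end Weights

section Membership

variable {p : ℕ} {hpm : p ∣ m} {x y : GW m n}

theorem wtTot_eq_cycWt (x : GW m n) : wtTot x = cycWt x univ := rfl

theorem wtTot_mul (x y : GW m n) : wtTot (x * y) = wtTot x + wtTot y := by
  simp only [wtTot, mul_wt, sum_add_distrib, add_right_inj]
  exact Equiv.sum_comp x.perm⁻¹ y.wt

theorem wtTot_inv (x : GW m n) : wtTot x⁻¹ = -wtTot x :=
  eq_neg_of_add_eq_zero_left <| by rw [← wtTot_mul, inv_mul_cancel]; simp [wtTot]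

theorem Gmem.mul (hx : Gmem p hpm x) (hy : Gmem p hpm y) : Gmem p hpm (x * y) := by
  rw [Gmem, wtTot_mul, map_add, hx, hy, add_zero]

theorem Gmem.inv (hx : Gmem p hpm x) : Gmem p hpm x⁻¹ := by
  rw [Gmem, wtTot_inv, map_neg, hx, neg_zero]

end Membership

def diagRefl (i : Fin n) (a : ZMod m) : GW m n := ⟨1, Pi.single i a⟩

def swapRefl (i j : Fin n) (a : ZMod m) : GW m n := ⟨swap i j, Pi.single i a - Pi.single j a⟩

inductive IsElemRefl : GW m n → Prop
  | diag (i : Fin n) {a : ZMod m} (ha : a ≠ 0) : IsElemRefl (diagRefl i a)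
  | swap {i j : Fin n} (hij : i ≠ j) (a : ZMod m) : IsElemRefl (swapRefl i j a)

section ElemRefl

variable {i j : Fin n} {a : ZMod m} {C : Finset (Fin n)}

theorem diagRefl_mul_diagRefl (i : Fin n) (a b : ZMod m) :
    diagRefl i a * diagRefl i b = diagRefl i (a + b) := by
  ext k
  · simp [diagRefl]
  · simp only [mul_wt, diagRefl, Pi.single_add, Pi.add_apply]
    rfl

theorem diagRefl_zero (i : Fin n) : diagRefl i (0 : ZMod m) = 1 := by
  ext k <;> simp [diagRefl]

theorem swapRefl_mul_self (i j : Fin n) (a : ZMod m) : swapRefl i j a * swapRefl i j a = 1 := by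
  ext k
  · simp [swapRefl]
  · simp only [swapRefl, mul_wt, Perm.inv_def, symm_swap, one_wt, Pi.sub_apply,
      Pi.single_apply, swap_apply_def]
    split_ifs <;> simp_all

theorem cycWt_diagRefl : cycWt (diagRefl i a) C = if i ∈ C then a else 0 :=
  sum_pi_single' i a C

theorem cycWt_swapRefl :
    cycWt (swapRefl i j a) C = (if i ∈ C then a else 0) - (if j ∈ C then a else 0) := by
  simp only [cycWt, swapRefl, Pi.sub_apply, sum_sub_distrib, sum_pi_single']

theorem Gmem_diagRefl {p : ℕ} {hpm : p ∣ m} (ha : ZMod.castHom hpm (ZMod p) a = 0) :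
    Gmem p hpm (diagRefl i a) := by
  rwa [Gmem, wtTot_eq_cycWt, cycWt_diagRefl, if_pos (mem_univ i)]

theorem Gmem_swapRefl {p : ℕ} {hpm : p ∣ m} : Gmem p hpm (swapRefl i j a) := by
  rw [Gmem, wtTot_eq_cycWt, cycWt_swapRefl, if_pos (mem_univ i), if_pos (mem_univ j), sub_self,
    map_zero]

end ElemRefl

section MulElemRefl

variable {x : GW m n} {i j : Fin n}

theorem cycWts_eq_cons {C : Finset (Fin n)} (hC : C ∈ cycles x) :
    cycWts x = cycWt x C ::ₘ ((cycles x).erase C).val.map (cycWt x) :=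
  map_val_eq_cons_erase _ hC

theorem cycWts_mul_diagRefl (x : GW m n) (i : Fin n) (a : ZMod m) :
    ∃ r, cycWts x = cycWt x (x.cycleOf i) ::ₘ r ∧
      cycWts (x * diagRefl i a) = (cycWt x (x.cycleOf i) + a) ::ₘ r := by
  have hcycles : cycles (x * diagRefl i a) = cycles x := cycles_congr (mul_one x.perm)
  have hwt : ∀ C ∈ cycles x,
      cycWt (x * diagRefl i a) C = cycWt x C + if i ∈ C then a else 0 := by
    intro C hC
    obtain ⟨k, rfl⟩ := mem_cycles.1 hC
    rw [cycWt_mul_cycleOf, cycWt_diagRefl]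
  refine ⟨_, cycWts_eq_cons cycleOf_mem_cycles, ?_⟩
  rw [cycWts_eq_cons (C := x.cycleOf i) (hcycles ▸ cycleOf_mem_cycles), hcycles,
    hwt _ cycleOf_mem_cycles, if_pos mem_cycleOf_self]
  refine congrArg _ (Multiset.map_congr rfl fun C hC => ?_)
  obtain ⟨hCi, hC⟩ := mem_erase.1 (mem_def.2 hC)
  rw [hwt C hC, if_neg fun hi => hCi (eq_cycleOf_of_mem_cycles hC hi), add_zero]

theorem cycleOf_mul_swapRefl (h : ¬x.perm.SameCycle i j) (a : ZMod m) (k : Fin n) :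
    (x * swapRefl i j a).cycleOf k =
      if k ∈ x.cycleOf i ∪ x.cycleOf j then x.cycleOf i ∪ x.cycleOf j else x.cycleOf k := by
  have hperm : (x * swapRefl i j a).perm = x.perm * swap i j := rfl
  ext l
  split_ifs with hk
  · rw [mem_union, mem_cycleOf, mem_cycleOf] at hk
    have hik := (Perm.sameCycle_mul_swap_iff h).2 hk
    rw [mem_cycleOf, mem_union, mem_cycleOf, mem_cycleOf, hperm, ← Perm.sameCycle_mul_swap_iff h]
    exact ⟨hik.trans, hik.symm.trans⟩
  · rw [mem_union, mem_cycleOf, mem_cycleOf, not_or] at hk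
    rw [mem_cycleOf, mem_cycleOf, hperm]
    exact Perm.sameCycle_mul_swap_iff_of_not_sameCycle (fun h' => hk.1 h'.symm)
      (fun h' => hk.2 h'.symm)

theorem erase_cycles_mul_swapRefl (h : ¬x.perm.SameCycle i j) (a : ZMod m) :
    (cycles (x * swapRefl i j a)).erase (x.cycleOf i ∪ x.cycleOf j) =
      ((cycles x).erase (x.cycleOf i)).erase (x.cycleOf j) := by
  ext C
  simp only [mem_erase, mem_cycles]
  constructor
  · rintro ⟨hCM, k, rfl⟩
    rw [cycleOf_mul_swapRefl h] at hCM ⊢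
    split_ifs at hCM ⊢ with hk
    · exact absurd rfl hCM
    rw [mem_union, not_or] at hk
    exact ⟨fun e => hk.2 (e ▸ mem_cycleOf_self), fun e => hk.1 (e ▸ mem_cycleOf_self),
      k, rfl⟩
  · rintro ⟨hCj, hCi, k, rfl⟩
    have hk : k ∉ x.cycleOf i ∪ x.cycleOf j := by
      rw [mem_union, not_or]
      exact ⟨fun hk => hCi (eq_cycleOf_of_mem_cycles cycleOf_mem_cycles hk).symm,
        fun hk => hCj (eq_cycleOf_of_mem_cycles cycleOf_mem_cycles hk).symm⟩
    exact ⟨fun e => hk (e ▸ mem_cycleOf_self), k, by rw [cycleOf_mul_swapRefl h, if_neg hk]⟩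

theorem cycWts_mul_swapRefl (h : ¬x.perm.SameCycle i j) (a : ZMod m) :
    ∃ r, cycWts x = cycWt x (x.cycleOf i) ::ₘ cycWt x (x.cycleOf j) ::ₘ r ∧
      cycWts (x * swapRefl i j a) = (cycWt x (x.cycleOf i) + cycWt x (x.cycleOf j)) ::ₘ r := by
  set Ci := x.cycleOf i
  set Cj := x.cycleOf j
  have hCij : Ci ≠ Cj := mt cycleOf_eq_cycleOf_iff.1 h
  have hM : (x * swapRefl i j a).cycleOf i = Ci ∪ Cj := by
    rw [cycleOf_mul_swapRefl h, if_pos (mem_union_left _ mem_cycleOf_self)]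
  have hwtM : cycWt (x * swapRefl i j a) (Ci ∪ Cj) = cycWt x Ci + cycWt x Cj := by
    have hdisj : Disjoint Ci Cj := disjoint_left.2 fun k hki hkj =>
      hCij ((eq_cycleOf_of_mem_cycles cycleOf_mem_cycles hki).trans
        (eq_cycleOf_of_mem_cycles cycleOf_mem_cycles hkj).symm)
    rw [cycWt_mul (fun _ => by simp only [mem_union, apply_mem_cycleOf_iff, Ci, Cj]),
      cycWt_swapRefl, if_pos (mem_union_left _ mem_cycleOf_self),
      if_pos (mem_union_right _ mem_cycleOf_self), sub_self, add_zero, cycWt, sum_union hdisj]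
    rfl
  have hwt : ∀ C ∈ ((cycles x).erase Ci).erase Cj,
      cycWt (x * swapRefl i j a) C = cycWt x C := by
    intro C hC
    obtain ⟨hCj, hCi, hC⟩ := by simpa only [mem_erase] using hC
    obtain ⟨k, rfl⟩ := mem_cycles.1 hC
    rw [cycWt_mul_cycleOf, cycWt_swapRefl, if_neg fun hi => hCi (eq_cycleOf_of_mem_cycles hC hi),
      if_neg fun hj => hCj (eq_cycleOf_of_mem_cycles hC hj), sub_self, add_zero]
  refine ⟨(((cycles x).erase Ci).erase Cj).val.map (cycWt x), ?_, ?_⟩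
  · rw [cycWts_eq_cons cycleOf_mem_cycles,
      map_val_eq_cons_erase _ (mem_erase.2 ⟨hCij.symm, cycleOf_mem_cycles⟩)]
  · rw [cycWts_eq_cons (hM ▸ cycleOf_mem_cycles), erase_cycles_mul_swapRefl h, hwtM]
    exact congrArg _ (Multiset.map_congr rfl fun C hC => hwt C (mem_def.2 hC))

theorem IsElemRefl.weightMove {t : GW m n} (ht : IsElemRefl t) (x : GW m n) :
    WeightMove (cycWts x) (cycWts (x * t)) := by
  cases ht with
  | diag i _ =>
    obtain ⟨r, hx, hxt⟩ := cycWts_mul_diagRefl x i _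
    rw [hx, hxt]
    exact .change _ _ r
  | @swap i j hij a =>
    by_cases h : x.perm.SameCycle i j
    · have h' : ¬(x * swapRefl i j a).perm.SameCycle i j := fun h' =>
        Perm.not_sameCycle_mul_swap hij h h'.symm
      obtain ⟨r, hxt, hx⟩ := cycWts_mul_swapRefl h' a
      rw [mul_assoc, swapRefl_mul_self, mul_one] at hx
      rw [hx, hxt]
      exact .split _ _ r
    · obtain ⟨r, hx, hxt⟩ := cycWts_mul_swapRefl h a
      rw [hx, hxt]
      exact .merge _ _ r

end MulElemRefl

section Codimension

variable {x t : GW m n} {i j : Fin n} {a : ZMod m}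

theorem codimfix_mul_le_add_one (ht : IsElemRefl t) (x : GW m n) :
    codimfix (x * t) ≤ codimfix x + 1 := by
  have := (ht.weightMove x).count_zero_le
  rw [codimfix_eq, codimfix_eq]
  omega

theorem nzWts_le_of_codimfix_mul_eq (ht : IsElemRefl t) (h : codimfix (x * t) = codimfix x + 1) :
    nzWts x ≤ nzWts (x * t) := by
  refine (ht.weightMove x).filter_ne_zero_le ?_
  have := (ht.weightMove x).count_zero_le
  have := count_zero_cycWts_le x
  rw [codimfix_eq, codimfix_eq] at h
  omega

theorem codimfix_mul_prod_le {l : List (GW m n)} (hl : ∀ t ∈ l, IsElemRefl t) (x : GW m n) :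
    codimfix (x * l.prod) ≤ codimfix x + l.length := by
  induction l generalizing x with
  | nil => simp
  | cons t l ih =>
    have h₁ := codimfix_mul_le_add_one (hl t List.mem_cons_self) x
    have h₂ := ih (fun s hs => hl s (List.mem_cons_of_mem t hs)) (x * t)
    rw [List.prod_cons, ← mul_assoc, List.length_cons]
    omega

theorem nzWts_le_of_codimfix_mul_prod_eq {l : List (GW m n)} (hl : ∀ t ∈ l, IsElemRefl t)
    (h : codimfix (x * l.prod) = codimfix x + l.length) : nzWts x ≤ nzWts (x * l.prod) := by
  induction l generalizing x with
  | nil => simp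
  | cons t l ih =>
    have hl' : ∀ s ∈ l, IsElemRefl s := fun s hs => hl s (List.mem_cons_of_mem t hs)
    have ht := hl t List.mem_cons_self
    rw [List.prod_cons, ← mul_assoc] at h ⊢
    rw [List.length_cons] at h
    have h₁ := codimfix_mul_le_add_one ht x
    have h₂ := codimfix_mul_prod_le hl' (x * t)
    exact (nzWts_le_of_codimfix_mul_eq ht (by omega)).trans (ih hl' (by omega))

theorem cycWts_one : cycWts (1 : GW m n) = Multiset.replicate n 0 := by
  have hcycles : cycles (1 : GW m n) = univ.image ({·}) := by
    simp only [cycles, cycleOf_eq_singleton (x := (1 : GW m n)) rfl]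
  refine Multiset.eq_replicate.2 ⟨?_, fun c hc => ?_⟩
  · rw [card_cycWts, numCycles, hcycles, card_image_of_injective _ singleton_injective,
      card_univ, Fintype.card_fin]
  · obtain ⟨C, -, rfl⟩ := Multiset.mem_map.1 hc
    exact cycWt_one

theorem codimfix_one : codimfix (1 : GW m n) = 0 := by
  rw [codimfix_eq, cycWts_one, Multiset.count_replicate_self, Nat.sub_self]

theorem codimfix_diagRefl (ha : a ≠ 0) : codimfix (diagRefl i a) = 1 := by
  obtain ⟨r, h₁, h₂⟩ := cycWts_mul_diagRefl 1 i a
  have hn : (cycWts (1 : GW m n)).count 0 = n := by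
    rw [cycWts_one, Multiset.count_replicate_self]
  rw [h₁, cycWt_one, Multiset.count_zero_cons, if_pos rfl] at hn
  rw [one_mul, cycWt_one, zero_add] at h₂
  rw [codimfix_eq, h₂, Multiset.count_zero_cons, if_neg ha]
  have := i.pos
  omega

theorem codimfix_swapRefl (hij : i ≠ j) (a : ZMod m) : codimfix (swapRefl i j a) = 1 := by
  obtain ⟨r, h₁, h₂⟩ := cycWts_mul_swapRefl (x := 1) (mt Perm.sameCycle_one.1 hij) a
  have hn : (cycWts (1 : GW m n)).count 0 = n := by
    rw [cycWts_one, Multiset.count_replicate_self]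
  rw [h₁, cycWt_one, cycWt_one, Multiset.count_zero_cons, Multiset.count_zero_cons,
    if_pos rfl] at hn
  rw [one_mul, cycWt_one, cycWt_one, add_zero] at h₂
  rw [codimfix_eq, h₂, Multiset.count_zero_cons, if_pos rfl]
  omega

theorem IsElemRefl.codimfix_eq_one (ht : IsElemRefl t) : codimfix t = 1 := by
  cases ht with
  | diag i ha => exact codimfix_diagRefl ha
  | swap hij a => exact codimfix_swapRefl hij a

theorem cycWts_inv (x : GW m n) : cycWts x⁻¹ = (cycWts x).map (-·) := by
  rw [cycWts, cycWts, cycles_inv, Multiset.map_map]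
  refine Multiset.map_congr rfl fun C hC => ?_
  obtain ⟨k, rfl⟩ := mem_cycles.1 (mem_def.2 hC)
  exact cycWt_inv fun _ => apply_mem_cycleOf_iff

theorem codimfix_inv (x : GW m n) : codimfix x⁻¹ = codimfix x := by
  rw [codimfix_eq, codimfix_eq, cycWts_inv, ← neg_zero,
    Multiset.count_map_eq_count' _ _ neg_injective, neg_zero]

theorem nzWts_inv (x : GW m n) : nzWts x⁻¹ = (nzWts x).map (-·) := by
  rw [nzWts, nzWts, cycWts_inv, Multiset.filter_map]
  exact congrArg _ (Multiset.filter_congr fun c _ => neg_ne_zero)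

end Codimension

/-- The multiset form of `PairedUp`. -/
inductive Pairable (p : ℕ) (hpm : p ∣ m) : Multiset (ZMod m) → Prop
  | nil : Pairable p hpm 0
  | single {a : ZMod m} {s : Multiset (ZMod m)} (ha : ZMod.castHom hpm (ZMod p) a = 0)
      (hs : Pairable p hpm s) : Pairable p hpm (a ::ₘ s)
  | pair {a b : ZMod m} {s : Multiset (ZMod m)} (hab : a + b = 0) (hs : Pairable p hpm s) :
      Pairable p hpm (a ::ₘ b ::ₘ s)

section Reduction

variable {z : GW m n} {a b : ZMod m}

theorem pairable_one (s : Multiset (ZMod m)) : Pairable 1 (one_dvd m) s := by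
  induction s using Multiset.induction with
  | empty => exact .nil
  | cons a s ih => exact .single (Subsingleton.elim _ _) ih

theorem eq_one_of_nzWts_eq_zero (hz : nzWts z = 0) (h : z.perm = 1) : z = 1 := by
  ext k
  · rw [h]; rfl
  by_contra hk
  have hmem : z.wt k ∈ nzWts z := by
    refine Multiset.mem_filter.2 ⟨Multiset.mem_map.2 ⟨{k}, ?_, ?_⟩, hk⟩
    · exact cycleOf_eq_singleton (x := z) (by rw [h]; rfl) ▸ cycleOf_mem_cycles
    · exact sum_singleton _ _
  simp [hz] at hmem

theorem codimfix_eq_add_one {z' : GW m n} {r : Multiset (ZMod m)} (h' : cycWts z' = 0 ::ₘ r)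
    (h : (cycWts z).count 0 = r.count 0) : codimfix z = codimfix z' + 1 := by
  have := count_zero_cycWts_le z'
  rw [h', Multiset.count_zero_cons, if_pos rfl] at this
  rw [codimfix_eq, codimfix_eq, h', Multiset.count_zero_cons, if_pos rfl, h]
  omega

/-- Split off `z.perm i` as a fixed point of weight `0`. -/
theorem exists_swapRefl_split (hz : z.perm ≠ 1) : ∃ i j a, i ≠ j ∧
    nzWts (z * swapRefl i j a) = nzWts z ∧ codimfix z = codimfix (z * swapRefl i j a) + 1 := by
  obtain ⟨i, hi⟩ : ∃ i, z.perm i ≠ i := not_forall.1 fun h => hz (Equiv.ext h)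
  set j := z.perm i
  have hij : i ≠ j := hi.symm
  set y := z * swapRefl i j (-z.wt j)
  have hyj : y.perm j = j := by rw [mul_perm, Perm.mul_apply, swapRefl, swap_apply_right]
  have hy : ¬y.perm.SameCycle i j := fun h =>
    Perm.not_sameCycle_mul_swap hij (Perm.sameCycle_apply_right.2 .rfl) h.symm
  have hwj : cycWt y (y.cycleOf j) = 0 := by
    rw [cycleOf_eq_singleton hyj, cycWt, sum_singleton, mul_wt, Perm.inv_def, symm_apply_apply]
    simp [swapRefl, hij]
  obtain ⟨r, h₁, h₂⟩ := cycWts_mul_swapRefl hy (-z.wt j)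
  rw [mul_assoc, swapRefl_mul_self, mul_one] at h₂
  rw [hwj, Multiset.cons_swap] at h₁
  rw [hwj, add_zero] at h₂
  refine ⟨i, j, -z.wt j, hij, ?_, codimfix_eq_add_one h₁ (by rw [h₂])⟩
  rw [nzWts, nzWts, h₁, h₂, Multiset.filter_ne_zero_cons, if_pos rfl]

theorem exists_diagRefl_cancel (ha : a ∈ nzWts z) : ∃ i,
    nzWts z = a ::ₘ nzWts (z * diagRefl i (-a)) ∧
      codimfix z = codimfix (z * diagRefl i (-a)) + 1 := by
  have ha0 := ne_zero_of_mem_nzWts ha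
  obtain ⟨C, hC, hCa⟩ := Multiset.mem_map.1 (Multiset.mem_of_mem_filter ha)
  obtain ⟨i, rfl⟩ := mem_cycles.1 (mem_def.2 hC)
  obtain ⟨r, h₁, h₂⟩ := cycWts_mul_diagRefl z i (-a)
  rw [hCa] at h₁ h₂
  rw [add_neg_cancel] at h₂
  refine ⟨i, ?_, codimfix_eq_add_one h₂ ?_⟩
  · rw [nzWts, nzWts, h₁, h₂, Multiset.filter_ne_zero_cons, Multiset.filter_ne_zero_cons,
      if_neg ha0, if_pos rfl]
  · rw [h₁, Multiset.count_zero_cons, if_neg ha0, add_zero]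

theorem exists_not_sameCycle_of_cons_le {s : Multiset (ZMod m)}
    (h : a ::ₘ b ::ₘ s ≤ cycWts z) : ∃ i j, ¬z.perm.SameCycle i j ∧
      cycWt z (z.cycleOf i) = a ∧ cycWt z (z.cycleOf j) = b := by
  obtain ⟨C, hC, rfl⟩ := Multiset.mem_map.1 (Multiset.mem_of_le h (Multiset.mem_cons_self _ _))
  rw [cycWts_eq_cons (mem_def.2 hC), Multiset.cons_le_cons_iff] at h
  obtain ⟨C', hC', rfl⟩ :=
    Multiset.mem_map.1 (Multiset.mem_of_le h (Multiset.mem_cons_self _ _))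
  obtain ⟨hne, hC'z⟩ := mem_erase.1 (mem_def.2 hC')
  obtain ⟨i, rfl⟩ := mem_cycles.1 (mem_def.2 hC)
  obtain ⟨j, rfl⟩ := mem_cycles.1 hC'z
  exact ⟨i, j, fun h => hne (cycleOf_eq_cycleOf_iff.2 h).symm, rfl, rfl⟩

theorem exists_swapRefl_merge {s : Multiset (ZMod m)} (h : nzWts z = a ::ₘ b ::ₘ s)
    (hab : a + b = 0) : ∃ i j, i ≠ j ∧
      nzWts z = a ::ₘ b ::ₘ nzWts (z * swapRefl i j 0) ∧
      codimfix z = codimfix (z * swapRefl i j 0) + 1 := by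
  have ha0 := ne_zero_of_mem_nzWts (h ▸ Multiset.mem_cons_self a _)
  have hb0 := ne_zero_of_mem_nzWts (h ▸ Multiset.mem_cons_of_mem (Multiset.mem_cons_self b s))
  obtain ⟨i, j, hij, hi, hj⟩ :=
    exists_not_sameCycle_of_cons_le (h ▸ Multiset.filter_le _ _ : a ::ₘ b ::ₘ s ≤ cycWts z)
  obtain ⟨r, h₁, h₂⟩ := cycWts_mul_swapRefl hij 0
  rw [hi, hj] at h₁ h₂
  rw [hab] at h₂
  refine ⟨i, j, fun e => hij (e ▸ .rfl), ?_, codimfix_eq_add_one h₂ ?_⟩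
  · rw [nzWts, nzWts, h₁, h₂, Multiset.filter_ne_zero_cons, Multiset.filter_ne_zero_cons,
      Multiset.filter_ne_zero_cons, if_neg ha0, if_neg hb0, if_pos rfl]
  · rw [h₁, Multiset.count_zero_cons, Multiset.count_zero_cons, if_neg ha0, if_neg hb0, add_zero,
      add_zero]

end Reduction

section ReflectionLength

variable {p : ℕ} {hpm : p ∣ m} {x y z : GW m n}

theorem IsElemRefl.isRefl {t : GW m n} (ht : IsElemRefl t) (hg : Gmem p hpm t) : IsRefl p hpm t :=
  ⟨hg, ht.codimfix_eq_one⟩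

theorem eq_one_or_exists_mul_elemRefl (hz : Pairable p hpm (nzWts z)) : z = 1 ∨
    ∃ z' t, IsElemRefl t ∧ Gmem p hpm t ∧ Pairable p hpm (nzWts z') ∧
      codimfix z = codimfix z' + 1 ∧ z = z' * t := by
  generalize hs : nzWts z = s at hz
  cases hz with
  | nil =>
    by_cases h1 : z.perm = 1
    · exact .inl (eq_one_of_nzWts_eq_zero hs h1)
    obtain ⟨i, j, a, hij, hN, hc⟩ := exists_swapRefl_split h1
    exact .inr ⟨_, _, .swap hij a, Gmem_swapRefl, hN.trans hs ▸ .nil, hc,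
      by rw [mul_assoc, swapRefl_mul_self, mul_one]⟩
  | @single a s ha hs' =>
    have hmem : a ∈ nzWts z := hs ▸ Multiset.mem_cons_self a s
    obtain ⟨i, hN, hc⟩ := exists_diagRefl_cancel hmem
    refine .inr ⟨_, _, .diag i (ne_zero_of_mem_nzWts hmem), Gmem_diagRefl ha,
      (Multiset.cons_inj_right a).1 (hN.symm.trans hs) ▸ hs', hc, ?_⟩
    rw [mul_assoc, diagRefl_mul_diagRefl, neg_add_cancel, diagRefl_zero, mul_one]
  | @pair a b s hab hs' =>
    obtain ⟨i, j, hij, hN, hc⟩ := exists_swapRefl_merge hs hab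
    refine .inr ⟨_, _, .swap hij 0, Gmem_swapRefl,
      (Multiset.cons_inj_right b).1 ((Multiset.cons_inj_right a).1 (hN.symm.trans hs)) ▸ hs', hc,
      by rw [mul_assoc, swapRefl_mul_self, mul_one]⟩

theorem exists_elemRefl_factorization (hz : Pairable p hpm (nzWts z)) :
    ∃ l : List (GW m n), (∀ t ∈ l, IsElemRefl t ∧ Gmem p hpm t) ∧
      l.length = codimfix z ∧ l.prod = z := by
  induction hc : codimfix z using Nat.strong_induction_on generalizing z with
  | _ c ih =>
    rcases eq_one_or_exists_mul_elemRefl hz with rfl | ⟨z', t, ht, htg, hz', hcz, rfl⟩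
    · exact ⟨[], by simp, by rw [← hc, codimfix_one]; rfl, rfl⟩
    obtain ⟨l, hl, hlen, rfl⟩ := ih _ (by omega) hz' rfl
    refine ⟨l ++ [t], fun s hs => ?_, by simp [hlen, ← hc, hcz], by simp⟩
    rcases List.mem_append.1 hs with hs | hs
    · exact hl s hs
    · exact List.mem_singleton.1 hs ▸ ⟨ht, htg⟩

theorem codimfix_mul_le (x y : GW m n) : codimfix (x * y) ≤ codimfix x + codimfix y := by
  obtain ⟨l, hl, hlen, rfl⟩ := exists_elemRefl_factorization (pairable_one (nzWts y))
  exact hlen ▸ codimfix_mul_prod_le (fun t ht => (hl t ht).1) x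

theorem codimfix_prod_le {l : List (GW m n)} (hl : ∀ t ∈ l, codimfix t = 1) :
    codimfix l.prod ≤ l.length := by
  induction l with
  | nil => simp [codimfix_one]
  | cons t l ih =>
    have := codimfix_mul_le t l.prod
    rw [hl t List.mem_cons_self] at this
    have := ih fun s hs => hl s (List.mem_cons_of_mem t hs)
    rw [List.prod_cons, List.length_cons]
    omega

theorem nzWts_le_mul_left (h : codimfix (x * y) = codimfix x + codimfix y) :
    nzWts x ≤ nzWts (x * y) := by
  obtain ⟨l, hl, hlen, rfl⟩ := exists_elemRefl_factorization (pairable_one (nzWts y))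
  exact nzWts_le_of_codimfix_mul_prod_eq (fun t ht => (hl t ht).1) (hlen ▸ h)

theorem nzWts_le_mul_right (h : codimfix (x * y) = codimfix x + codimfix y) :
    nzWts y ≤ nzWts (x * y) := by
  have h' : codimfix (y⁻¹ * x⁻¹) = codimfix y⁻¹ + codimfix x⁻¹ := by
    rw [← mul_inv_rev, codimfix_inv, codimfix_inv, codimfix_inv, h, add_comm]
  have := Multiset.map_le_map (f := (-·)) (nzWts_le_mul_left h')
  rw [← mul_inv_rev, nzWts_inv, nzWts_inv, Multiset.map_map, Multiset.map_map] at this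
  simpa [Function.comp_def] using this

theorem pairable_of_card_le_one (hz : Gmem p hpm z) (h : Multiset.card (nzWts z) ≤ 1) :
    Pairable p hpm (nzWts z) := by
  rcases Nat.le_one_iff_eq_zero_or_eq_one.1 h with h | h
  · rw [Multiset.card_eq_zero.1 h]
    exact .nil
  · obtain ⟨a, ha⟩ := Multiset.card_eq_one.1 h
    have hsum := sum_nzWts z
    rw [ha, Multiset.sum_singleton] at hsum
    rw [ha]
    exact .single (hsum ▸ hz) .nil

/-- Merging cycles by weightless transpositions reduces to one cycle, whose weight is then a
multiple of `p`. -/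
theorem mem_closure_isRefl (hz : Gmem p hpm z) : z ∈ Submonoid.closure {t | IsRefl p hpm t} := by
  induction hc : numCycles z using Nat.strong_induction_on generalizing z with
  | _ c ih =>
    by_cases h : numCycles z ≤ 1
    · obtain ⟨l, hl, -, rfl⟩ := exists_elemRefl_factorization
        (pairable_of_card_le_one hz ((card_nzWts_le z).trans h))
      exact Submonoid.list_prod_mem _ fun t ht =>
        Submonoid.subset_closure ((hl t ht).1.isRefl (hl t ht).2)
    obtain ⟨i, j, hij⟩ := exists_not_sameCycle (not_le.1 h)
    obtain ⟨r, h₁, h₂⟩ := cycWts_mul_swapRefl hij 0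
    have hlt : numCycles (z * swapRefl i j 0) < c := by
      rw [← hc, ← card_cycWts, ← card_cycWts, h₁, h₂]
      simp
    have hz' := ih _ hlt (hz.mul Gmem_swapRefl) rfl
    rw [← mul_one z, ← swapRefl_mul_self i j 0, ← mul_assoc]
    exact Submonoid.mul_mem _ hz' (Submonoid.subset_closure
      ((IsElemRefl.swap (by rintro rfl; exact hij .rfl) 0).isRefl Gmem_swapRefl))

theorem lR_prod_le {l : List (GW m n)} (hl : ∀ t ∈ l, IsRefl p hpm t) :
    lR p hpm l.prod ≤ l.length :=
  Nat.sInf_le ⟨l, hl, rfl, rfl⟩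

theorem exists_length_eq_lR (hz : Gmem p hpm z) :
    ∃ l : List (GW m n), (∀ t ∈ l, IsRefl p hpm t) ∧
      l.length = lR p hpm z ∧ l.prod = z := by
  obtain ⟨l, hl, hprod⟩ := Submonoid.exists_list_of_mem_closure (mem_closure_isRefl hz)
  have hne : {k | ∃ l : List (GW m n), (∀ t ∈ l, IsRefl p hpm t) ∧
      l.length = k ∧ l.prod = z}.Nonempty := ⟨l.length, l, hl, rfl, hprod⟩
  exact Nat.sInf_mem hne

theorem codimfix_le_lR (hz : Gmem p hpm z) : codimfix z ≤ lR p hpm z := by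
  obtain ⟨l, hl, hlen, rfl⟩ := exists_length_eq_lR hz
  exact hlen ▸ codimfix_prod_le fun t ht => (hl t ht).2

theorem lR_eq_codimfix (hz : Gmem p hpm z) (hpair : Pairable p hpm (nzWts z)) :
    lR p hpm z = codimfix z := by
  refine le_antisymm ?_ (codimfix_le_lR hz)
  obtain ⟨l, hl, hlen, hprod⟩ := exists_elemRefl_factorization hpair
  calc lR p hpm z = lR p hpm l.prod := by rw [hprod]
    _ ≤ l.length := lR_prod_le fun t ht => (hl t ht).1.isRefl (hl t ht).2
    _ = codimfix z := hlen

theorem interval_codimfix_eq_interval_lR {w : GW m n} (hw : Gmem p hpm w)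
    (hpair : ∀ z : GW m n, Gmem p hpm z → nzWts z ≤ nzWts w → Pairable p hpm (nzWts z)) :
    interval p hpm codimfix w = interval p hpm (lR p hpm) w := by
  have hlR : ∀ z : GW m n, Gmem p hpm z → nzWts z ≤ nzWts w → lR p hpm z = codimfix z :=
    fun z hz h => lR_eq_codimfix hz (hpair z hz h)
  ext u
  refine and_congr_right fun hu => ?_
  have hv : Gmem p hpm (u⁻¹ * w) := hu.inv.mul hw
  have huv : u * (u⁻¹ * w) = w := mul_inv_cancel_left u w
  simp only [leF, hlR w hw le_rfl]
  constructor
  · intro h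
    have h' : codimfix (u * (u⁻¹ * w)) = codimfix u + codimfix (u⁻¹ * w) := by rw [huv, h]
    have hleu := nzWts_le_mul_left h'
    have hlev := nzWts_le_mul_right h'
    rw [huv] at hleu hlev
    rw [hlR u hu hleu, hlR _ hv hlev, h]
  · intro h
    have := codimfix_le_lR hu
    have := codimfix_le_lR hv
    have := codimfix_mul_le u (u⁻¹ * w)
    rw [huv] at this
    omega

theorem pairable_of_le {w : GW m n} (hz : Gmem p hpm z) (h : nzWts z ≤ nzWts w)
    (hw : Multiset.card (nzWts w) ≤ 1 ∨ ∃ b, nzWts w = b ::ₘ {-b}) :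
    Pairable p hpm (nzWts z) := by
  by_cases hz1 : Multiset.card (nzWts z) ≤ 1
  · exact pairable_of_card_le_one hz hz1
  obtain ⟨b, hb⟩ := hw.resolve_left fun hw => hz1 ((Multiset.card_le_card h).trans hw)
  rw [Multiset.eq_of_le_of_card_le h (by rw [hb]; simp; omega), hb]
  exact .pair (add_neg_cancel b) .nil

theorem card_nzWts_le_one_or_eq_pair {w : GW m n} (hcyc : numCycles w = 1 ∨
      (∃ C₁ C₂ : Finset (Fin n), C₁ ≠ C₂ ∧ cycles w = {C₁, C₂} ∧
        cycWt w C₁ ≠ 0 ∧ cycWt w C₂ ≠ 0 ∧ cycWt w C₁ + cycWt w C₂ = 0)) :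
    Multiset.card (nzWts w) ≤ 1 ∨ ∃ b, nzWts w = b ::ₘ {-b} := by
  rcases hcyc with h | ⟨C₁, C₂, hne, hcyc, h₁, -, hsum⟩
  · exact .inl ((card_nzWts_le w).trans h.le)
  · refine .inr ⟨cycWt w C₁, ?_⟩
    rw [nzWts, cycWts, hcyc, insert_val_of_notMem (by simpa using hne)]
    simp [h₁, eq_neg_of_add_eq_zero_right hsum]

end ReflectionLength

end GW

theorem stmt10_general (m p n : ℕ) (hpm : p ∣ m)
    (w : GW m n) (hw : GW.Gmem p hpm w)
    (hcyc : GW.numCycles w = 1 ∨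
      (∃ C₁ C₂ : Finset (Fin n), C₁ ≠ C₂ ∧ GW.cycles w = {C₁, C₂} ∧
        GW.cycWt w C₁ ≠ 0 ∧ GW.cycWt w C₂ ≠ 0 ∧ GW.cycWt w C₁ + GW.cycWt w C₂ = 0)) :
    GW.interval p hpm GW.codimfix w = GW.interval p hpm (GW.lR p hpm) w :=
  GW.interval_codimfix_eq_interval_lR hw fun _ hz h =>
    GW.pairable_of_le hz h (GW.card_nzWts_le_one_or_eq_pair hcyc)

/-- Suppose `w ∈ G(m,p,n)` has a single cycle, or exactly two cycles whose weights are
nonzero and sum to `0` in `ℤ/mℤ`.  Then `[id, w]_{cdf} = [id, w]_{ℓ_R}`. -/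
theorem stmt10 (m p n : ℕ) (hm : 0 < m) (hp : 0 < p) (hn : 0 < n) (hpm : p ∣ m)
    (w : GW m n) (hw : GW.Gmem p hpm w)
    (hcyc : GW.numCycles w = 1 ∨
      (∃ C₁ C₂ : Finset (Fin n), C₁ ≠ C₂ ∧ GW.cycles w = {C₁, C₂} ∧
        GW.cycWt w C₁ ≠ 0 ∧ GW.cycWt w C₂ ≠ 0 ∧ GW.cycWt w C₁ + GW.cycWt w C₂ = 0)) :
    GW.interval p hpm GW.codimfix w = GW.interval p hpm (GW.lR p hpm) w :=
  stmt10_general m p n hpm w hw hcyc
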